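/- Let p be an odd prime and r a positive integer. Then the following exact identity of rational numbers holds: Σ_{i+j+k=2p^r, i,j,k∈𝒫_p} (−1)^i/(ijk) = (1/p^r)·( Σ_{1 ≤ j < l ≤ p^r, with j, l, l−j ∈ 𝒫_p} 1/(jl) − Σ_{1 ≤ j < l ≤ 2p^r, with j, l, l−j ∈ 𝒫_p} 1/(jl) ), where the first sum is over triples of positive integers summing to 2p^r with all entries coprime to p. -/

import Mathlib

/-!
Put `N = 2 p ^ r`. Since `a + b + c = N`, partial fractions give
`1 / (a b c) = (1 / (b c) + 1 / (a c) + 1 / (a b)) / N`, and as the index set is symmetric the sum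
becomes `(1 / N) ∑ ((-1) ^ a + (-1) ^ b + (-1) ^ c) / (b c)`. Because `N` is even, the sign sum
is `3` when `a, b, c` are all even and `-1` otherwise; since `2` is prime to `p`, halving the
all-even triples turns their contribution into the same sum for `p ^ r`. Finally, for `p ∣ n`,
the pairs `(j, l)` correspond to the triples `(n - l, j, l - j)`, and
`1 / (j l) + 1 / ((l - j) l) = 1 / (j (l - j))` shows that twice the pair sum is
`∑ 1 / (b c)` over the triples summing to `n`.
-/

open Finset

def coprimeCompositions (k n p : ℕ) : Finset (Fin k → ℕ) :=
  (Nat.antidiagonalTuple k n).filter (fun v => ∀ i, 0 < v i ∧ (v i).Coprime p)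

def coprimePairs (n p : ℕ) : Finset (ℕ × ℕ) :=
  (Icc 1 n ×ˢ Icc 1 n).filter
    (fun q => q.1 < q.2 ∧ q.1.Coprime p ∧ q.2.Coprime p ∧ (q.2 - q.1).Coprime p)

lemma Nat.coprime_sub_iff_of_dvd {n l p : ℕ} (hpn : p ∣ n) (hl : l ≤ n) :
    (n - l).Coprime p ↔ l.Coprime p := by
  rw [← Nat.isCoprime_iff_coprime, ← Nat.isCoprime_iff_coprime]
  obtain ⟨k, rfl⟩ := hpn
  push_cast [Nat.cast_sub hl]
  rw [sub_eq_neg_add, IsCoprime.add_mul_left_left_iff, IsCoprime.neg_left_iff]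

lemma neg_one_pow_add_neg_one_pow_add_neg_one_pow {R : Type*} [Ring R] {a b c : ℕ}
    (h : Even (a + b + c)) :
    (-1 : R) ^ a + (-1) ^ b + (-1) ^ c = -1 + if Even a ∧ Even b ∧ Even c then 4 else 0 := by
  rcases Nat.even_or_odd a with ha | ha <;>
  rcases Nat.even_or_odd b with hb | hb <;>
  rcases Nat.even_or_odd c with hc | hc <;>
  simp_all [Nat.even_add, ← Nat.not_even_iff_odd]
  norm_num

lemma one_div_mul_mul_eq {K : Type*} [Field K] {a b c : K} (ha : a ≠ 0) (hb : b ≠ 0)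
    (hc : c ≠ 0) (habc : a + b + c ≠ 0) :
    1 / (a * b * c) = 1 / (a + b + c) * (1 / (b * c) + 1 / (a * c) + 1 / (a * b)) := by
  field_simp

section

variable {k n p : ℕ}

@[simp]
lemma mem_coprimeCompositions {v : Fin k → ℕ} :
    v ∈ coprimeCompositions k n p ↔ ∑ i, v i = n ∧ ∀ i, 0 < v i ∧ (v i).Coprime p := by
  simp only [coprimeCompositions, mem_filter, Nat.mem_antidiagonalTuple]

@[simp]
lemma mem_coprimePairs {q : ℕ × ℕ} :
    q ∈ coprimePairs n p ↔ 1 ≤ q.1 ∧ q.2 ≤ n ∧ q.1 < q.2 ∧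
      q.1.Coprime p ∧ q.2.Coprime p ∧ (q.2 - q.1).Coprime p := by
  simp only [coprimePairs, mem_filter, mem_product, mem_Icc]
  constructor
  · rintro ⟨⟨⟨h1, -⟩, -, h2⟩, h⟩
    exact ⟨h1, h2, h⟩
  · rintro ⟨h1, h2, h⟩
    exact ⟨⟨⟨h1, by omega⟩, by omega, h2⟩, h⟩

lemma sum_coprimeCompositions_comp_perm {M : Type*} [AddCommMonoid M] (σ : Equiv.Perm (Fin k))
    (f : (Fin k → ℕ) → M) :
    ∑ v ∈ coprimeCompositions k n p, f (v ∘ σ) = ∑ v ∈ coprimeCompositions k n p, f v :=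
  sum_nbij' (· ∘ σ) (· ∘ σ.symm)
    (fun v hv => by
      rw [mem_coprimeCompositions] at hv ⊢
      exact ⟨(Equiv.sum_comp σ v).trans hv.1, fun i => hv.2 (σ i)⟩)
    (fun v hv => by
      rw [mem_coprimeCompositions] at hv ⊢
      exact ⟨(Equiv.sum_comp σ.symm v).trans hv.1, fun i => hv.2 (σ.symm i)⟩)
    (fun v _ => by ext; simp) (fun v _ => by ext; simp) (fun _ _ => rfl)

lemma sum_coprimeCompositions_filter_even {M : Type*} [AddCommMonoid M]
    (h2p : Nat.Coprime 2 p) (f : (Fin k → ℕ) → M) :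
    ∑ v ∈ coprimeCompositions k n p, f (2 • v) =
      ∑ v ∈ (coprimeCompositions k (2 * n) p).filter (fun v => ∀ i, Even (v i)), f v := by
  refine sum_nbij' (2 • ·) (fun v i => v i / 2) (fun v hv => ?_) (fun v hv => ?_)
    (fun v _ => by ext; simp) (fun v hv => ?_) (fun _ _ => rfl)
  · simp only [mem_coprimeCompositions, mem_filter, Pi.smul_apply, smul_eq_mul] at hv ⊢
    refine ⟨⟨by rw [← mul_sum, hv.1], fun i => ?_⟩, fun i => even_two_mul _⟩
    exact ⟨by linarith [(hv.2 i).1], Nat.Coprime.mul_left h2p (hv.2 i).2⟩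
  · simp only [mem_coprimeCompositions, mem_filter] at hv ⊢
    obtain ⟨⟨hsum, hv⟩, heven⟩ := hv
    have hv2 : v = 2 • fun i => v i / 2 :=
      funext fun i => (Nat.two_mul_div_two_of_even (heven i)).symm
    rw [hv2] at hsum hv
    simp only [Pi.smul_apply, smul_eq_mul, ← mul_sum] at hsum hv
    exact ⟨by omega, fun i => ⟨Nat.pos_of_mul_pos_left (hv i).1,
      Nat.Coprime.coprime_mul_left (hv i).2⟩⟩
  · simp only [mem_filter] at hv
    ext i
    exact Nat.two_mul_div_two_of_even (hv.2 i)

lemma snd_lt_of_mem_coprimePairs (hp : p ≠ 1) (hpn : p ∣ n) {q : ℕ × ℕ}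
    (hq : q ∈ coprimePairs n p) : q.2 < n := by
  rw [mem_coprimePairs] at hq
  refine lt_of_le_of_ne hq.2.1 fun h => hp ?_
  exact Nat.eq_one_of_dvd_coprimes (h ▸ hq.2.2.2.2.1) hpn dvd_rfl

lemma sum_coprimePairs_eq {M : Type*} [AddCommMonoid M] (hp : p ≠ 1) (hpn : p ∣ n)
    (f : ℕ → ℕ → M) :
    ∑ q ∈ coprimePairs n p, f q.1 q.2 =
      ∑ v ∈ coprimeCompositions 3 n p, f (v 1) (v 1 + v 2) := by
  refine sum_nbij' (fun q => ![n - q.2, q.1, q.2 - q.1]) (fun v => (v 1, v 1 + v 2))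
    (fun q hq => ?_) (fun v hv => ?_) (fun q hq => ?_) (fun v hv => ?_) (fun q hq => ?_)
  · have hqn := snd_lt_of_mem_coprimePairs hp hpn hq
    obtain ⟨hj, -, hjl, hcj, hcl, hcs⟩ := mem_coprimePairs.mp hq
    rw [mem_coprimeCompositions, Fin.sum_univ_three, Fin.forall_fin_succ, Fin.forall_fin_succ,
      Fin.forall_fin_one]
    simp only [Fin.succ_zero_eq_one, Fin.succ_one_eq_two, Matrix.cons_val,
      Nat.coprime_sub_iff_of_dvd hpn hqn.le]
    exact ⟨by omega, ⟨by omega, hcl⟩, ⟨hj, hcj⟩, by omega, hcs⟩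
  · rw [mem_coprimeCompositions, Fin.sum_univ_three] at hv
    obtain ⟨hsum, hv⟩ := hv
    have hv12 : v 1 + v 2 = n - v 0 := by omega
    have h2 := (hv 2).1
    simp only [mem_coprimePairs, Nat.add_sub_cancel_left]
    rw [hv12, Nat.coprime_sub_iff_of_dvd hpn (by omega)]
    exact ⟨(hv 1).1, by omega, by omega, (hv 1).2, (hv 0).2, (hv 2).2⟩
  · rw [mem_coprimePairs] at hq
    simp only [Matrix.cons_val]
    exact Prod.ext rfl (by dsimp only; omega)
  · rw [mem_coprimeCompositions, Fin.sum_univ_three] at hv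
    ext i
    fin_cases i <;> simp [← hv.1, add_assoc]
  · rw [mem_coprimePairs] at hq
    simp only [Matrix.cons_val]
    congr
    omega

lemma two_mul_sum_coprimePairs (hp : p ≠ 1) (hpn : p ∣ n) :
    2 * ∑ q ∈ coprimePairs n p, 1 / ((q.1 : ℚ) * q.2) =
      ∑ v ∈ coprimeCompositions 3 n p, 1 / ((v 1 : ℚ) * v 2) := by
  rw [two_mul, sum_coprimePairs_eq hp hpn (fun j l => 1 / ((j : ℚ) * l))]
  nth_rewrite 2 [← sum_coprimeCompositions_comp_perm (Equiv.swap 1 2)]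
  rw [← sum_add_distrib]
  refine sum_congr rfl fun v hv => ?_
  have := (mem_coprimeCompositions.mp hv).2
  have h1 : (v 1 : ℚ) ≠ 0 := by exact_mod_cast (this 1).1.ne'
  have h2 : (v 2 : ℚ) ≠ 0 := by exact_mod_cast (this 2).1.ne'
  simp only [Function.comp_apply, Equiv.swap_apply_left, Equiv.swap_apply_right, Nat.cast_add]
  field_simp
  ring

lemma sum_neg_one_pow_div_mul_mul :
    ∑ v ∈ coprimeCompositions 3 n p, (-1 : ℚ) ^ v 0 / ((v 0 : ℚ) * v 1 * v 2) =
      1 / n * ∑ v ∈ coprimeCompositions 3 n p,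
        ((-1 : ℚ) ^ v 0 + (-1) ^ v 1 + (-1) ^ v 2) / ((v 1 : ℚ) * v 2) := by
  have h01 := sum_coprimeCompositions_comp_perm (n := n) (p := p) (Equiv.swap (0 : Fin 3) 1)
    fun v => (-1 : ℚ) ^ v 1 / ((v 1 : ℚ) * v 2)
  have h02 := sum_coprimeCompositions_comp_perm (n := n) (p := p) (Equiv.swap (0 : Fin 3) 2)
    fun v => (-1 : ℚ) ^ v 2 / ((v 1 : ℚ) * v 2)
  simp only [Function.comp_apply, Equiv.swap_apply_right, Equiv.swap_apply_of_ne_of_ne, ne_eq,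
    Fin.reduceEq, not_false_eq_true] at h01 h02
  calc _ = ∑ v ∈ coprimeCompositions 3 n p, 1 / n * ((-1 : ℚ) ^ v 0 / ((v 1 : ℚ) * v 2) +
        (-1) ^ v 0 / ((v 0 : ℚ) * v 2) + (-1) ^ v 0 / ((v 1 : ℚ) * v 0)) := by
        refine sum_congr rfl fun v hv => ?_
        rw [mem_coprimeCompositions, Fin.sum_univ_three] at hv
        obtain ⟨hsum, hv⟩ := hv
        have h0 : (v 0 : ℚ) ≠ 0 := by exact_mod_cast (hv 0).1.ne'
        have h1 : (v 1 : ℚ) ≠ 0 := by exact_mod_cast (hv 1).1.ne'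
        have h2 : (v 2 : ℚ) ≠ 0 := by exact_mod_cast (hv 2).1.ne'
        have hn : (n : ℚ) = v 0 + v 1 + v 2 := by rw [← hsum]; push_cast; rfl
        have hn0 : (n : ℚ) ≠ 0 := by
          have := (hv 0).1
          exact_mod_cast (by omega : n ≠ 0)
        rw [div_eq_mul_one_div, one_div_mul_mul_eq h0 h1 h2 (hn ▸ hn0), ← hn]
        ring
    _ = _ := by
      rw [← mul_sum, sum_add_distrib, sum_add_distrib, h01, h02]
      simp only [add_div, sum_add_distrib]

lemma sum_neg_one_pow_add_div_mul (h2p : Nat.Coprime 2 p) :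
    ∑ v ∈ coprimeCompositions 3 (2 * n) p,
        ((-1 : ℚ) ^ v 0 + (-1) ^ v 1 + (-1) ^ v 2) / ((v 1 : ℚ) * v 2) =
      ∑ v ∈ coprimeCompositions 3 n p, 1 / ((v 1 : ℚ) * v 2) -
        ∑ v ∈ coprimeCompositions 3 (2 * n) p, 1 / ((v 1 : ℚ) * v 2) := by
  have halve : ∑ v ∈ coprimeCompositions 3 n p, 1 / ((v 1 : ℚ) * v 2) =
      ∑ v ∈ (coprimeCompositions 3 (2 * n) p).filter (fun v => ∀ i, Even (v i)),
        4 / ((v 1 : ℚ) * v 2) := by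
    rw [← sum_coprimeCompositions_filter_even h2p]
    refine sum_congr rfl fun v _ => ?_
    simp only [Pi.smul_apply, smul_eq_mul, Nat.cast_mul, Nat.cast_ofNat]
    ring
  rw [halve, sum_filter, ← sum_sub_distrib]
  refine sum_congr rfl fun v hv => ?_
  rw [mem_coprimeCompositions, Fin.sum_univ_three] at hv
  rw [neg_one_pow_add_neg_one_pow_add_neg_one_pow (hv.1 ▸ even_two_mul n)]
  simp only [Fin.forall_fin_succ, IsEmpty.forall_iff, and_true, Fin.succ_zero_eq_one,
    Fin.succ_one_eq_two]
  split_ifs <;> ring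

end

theorem alt_three_sum_eq_pair_sums (p : ℕ) (hp : p.Prime) (hodd : Odd p)
    (r : ℕ) (hr : 0 < r) :
    (∑ v ∈ (Finset.Nat.antidiagonalTuple 3 (2 * p ^ r)).filter
        (fun v => ∀ i, 0 < v i ∧ Nat.Coprime (v i) p),
      (-1 : ℚ) ^ (v 0) / ((v 0 : ℚ) * (v 1 : ℚ) * (v 2 : ℚ))) =
    (1 / (p : ℚ) ^ r) *
      ((∑ q ∈ (Finset.Icc 1 (p ^ r) ×ˢ Finset.Icc 1 (p ^ r)).filter
            (fun q => q.1 < q.2 ∧ Nat.Coprime q.1 p ∧ Nat.Coprime q.2 p ∧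
              Nat.Coprime (q.2 - q.1) p),
          1 / ((q.1 : ℚ) * (q.2 : ℚ))) -
       (∑ q ∈ (Finset.Icc 1 (2 * p ^ r) ×ˢ Finset.Icc 1 (2 * p ^ r)).filter
            (fun q => q.1 < q.2 ∧ Nat.Coprime q.1 p ∧ Nat.Coprime q.2 p ∧
              Nat.Coprime (q.2 - q.1) p),
          1 / ((q.1 : ℚ) * (q.2 : ℚ)))) := by
  have hpM : p ∣ p ^ r := dvd_pow_self p hr.ne'
  change ∑ v ∈ coprimeCompositions 3 (2 * p ^ r) p, _ = 1 / (p : ℚ) ^ r *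
    (∑ q ∈ coprimePairs (p ^ r) p, _ - ∑ q ∈ coprimePairs (2 * p ^ r) p, _)
  rw [sum_neg_one_pow_div_mul_mul, sum_neg_one_pow_add_div_mul (Nat.coprime_two_left.mpr hodd),
    ← two_mul_sum_coprimePairs hp.ne_one hpM,
    ← two_mul_sum_coprimePairs hp.ne_one (hpM.mul_left 2)]
  push_cast
  field_simp
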